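/- Let (P_θ)_{θ∈Θ} be a statistical model on Ω, Q a probability measure on Θ, T the joint probability measure on Ω × Θ with T(A×B) = ∫_B P_θ(A) Q(dθ), and κ ∈ (0,1). (a) For every p-function f w.r.t. T there exist a conditional p-function g w.r.t. (P_θ) and a p-function h w.r.t. Q such that g(ω;θ)·h(θ) ≤ κ^{−1} f(ω,θ)^{1−κ} for T-almost every (ω,θ). (b) For every conditional p-function g w.r.t. (P_θ) and every p-function h w.r.t. Q, the function (ω,θ) ↦ min(1, κ^{−2}·(g(ω;θ)·h(θ))^{1−κ}) is a p-function w.r.t. T. -/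

import Mathlib

open MeasureTheory ProbabilityTheory
open scoped ENNReal

/-
A super-uniform `f` (one with `μ {f ≤ ε} ≤ ε`) stochastically dominates the uniform law on
`(0, 1]`, so `∫ φ ∘ f ≤ ∫₀¹ φ` for every antitone `φ`.

(a) With `φ v = v ^ (κ - 1)` this makes `e = κ f ^ (κ - 1)` an e-variable for `T`. Split its
mass as `H θ = ∫ e(·, θ) dP_θ`: by Markov's inequality `min 1 (H θ / e)` is conditionally
super-uniform and `min 1 (1 / H)` is super-uniform for `Q`, and their product is at most
`1 / e = κ⁻¹ f ^ (1 - κ)`.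

(b) Conditioning on `θ`, `T {g h ≤ t} ≤ ∫ min 1 (t / h) dQ ≤ ∫₀¹ min 1 (t / u) du
= t (1 + log t⁻¹)`, and `t (1 + log t⁻¹) ≤ κ⁻² t ^ (1 - κ)` because `exp (κ u) ≥ κ² (1 + u)`.
-/

open Set

lemma ENNReal.antitone_rpow_of_nonpos {z : ℝ} (hz : z ≤ 0) :
    Antitone fun v : ℝ≥0∞ => v ^ z := fun u v huv =>
  calc v ^ z = (v ^ (-z))⁻¹ := by rw [← ENNReal.rpow_neg, neg_neg]
    _ ≤ (u ^ (-z))⁻¹ := ENNReal.inv_le_inv' (ENNReal.rpow_le_rpow huv (neg_nonneg.2 hz))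
    _ = u ^ z := by rw [← ENNReal.rpow_neg, neg_neg]

lemma lintegral_Ioc_ofReal_rpow_sub_one {a : ℝ} (ha : 0 < a) :
    ∫⁻ u in Ioc (0 : ℝ) 1, ENNReal.ofReal u ^ (a - 1) = ENNReal.ofReal a⁻¹ := by
  have hint : IntegrableOn (fun u : ℝ => u ^ (a - 1)) (Ioc 0 1) :=
    (intervalIntegrable_iff_integrableOn_Ioc_of_le zero_le_one).1
      (intervalIntegral.intervalIntegrable_rpow' (by linarith))
  calc ∫⁻ u in Ioc (0 : ℝ) 1, ENNReal.ofReal u ^ (a - 1)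
      = ∫⁻ u in Ioc (0 : ℝ) 1, ENNReal.ofReal (u ^ (a - 1)) :=
        setLIntegral_congr_fun measurableSet_Ioc fun u hu => ENNReal.ofReal_rpow_of_pos hu.1
    _ = ENNReal.ofReal (∫ u in Ioc (0 : ℝ) 1, u ^ (a - 1)) :=
        (ofReal_integral_eq_lintegral_ofReal hint
          (ae_restrict_of_forall_mem measurableSet_Ioc fun u hu =>
            Real.rpow_nonneg hu.1.le _)).symm
    _ = ENNReal.ofReal a⁻¹ := by
        rw [← intervalIntegral.integral_of_le zero_le_one, integral_rpow (Or.inl (by linarith))]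
        simp [ha.ne']

lemma lintegral_Ioc_min_one_mul_inv_le {t : ℝ} (ht0 : 0 < t) (ht1 : t ≤ 1) :
    ∫⁻ u in Ioc (0 : ℝ) 1, min 1 (ENNReal.ofReal t * (ENNReal.ofReal u)⁻¹)
      ≤ ENNReal.ofReal (t * (1 + Real.log t⁻¹)) := by
  have hint : IntegrableOn (fun u : ℝ => t * u⁻¹) (Ioc t 1) :=
    ((continuousOn_const.mul (continuousOn_inv₀.mono fun u hu => (ht0.trans_le hu.1).ne')
      ).integrableOn_Icc).mono_set Ioc_subset_Icc_self
  have hlow : ∫⁻ u in Ioc 0 t, min 1 (ENNReal.ofReal t * (ENNReal.ofReal u)⁻¹)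
      ≤ ENNReal.ofReal t :=
    calc _ ≤ ∫⁻ _ in Ioc 0 t, 1 := lintegral_mono fun _ => min_le_left _ _
      _ = ENNReal.ofReal t := by simp
  have hhigh : ∫⁻ u in Ioc t 1, min 1 (ENNReal.ofReal t * (ENNReal.ofReal u)⁻¹)
      ≤ ENNReal.ofReal (t * Real.log t⁻¹) :=
    calc _ ≤ ∫⁻ u in Ioc t 1, ENNReal.ofReal (t * u⁻¹) := by
          refine setLIntegral_mono (by fun_prop) fun u hu => (min_le_right _ _).trans_eq ?_
          rw [ENNReal.ofReal_mul ht0.le, ENNReal.ofReal_inv_of_pos (ht0.trans hu.1)]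
      _ = ENNReal.ofReal (∫ u in Ioc t 1, t * u⁻¹) :=
          (ofReal_integral_eq_lintegral_ofReal hint
            (ae_restrict_of_forall_mem measurableSet_Ioc fun u hu =>
              by have := ht0.trans hu.1; positivity)).symm
      _ = ENNReal.ofReal (t * Real.log t⁻¹) := by
          rw [← intervalIntegral.integral_of_le ht1, intervalIntegral.integral_const_mul,
            integral_inv (by simp [uIcc_of_le ht1, ht0.not_ge]), one_div]
  calc _ ≤ _ := by rw [← Ioc_union_Ioc_eq_Ioc ht0.le ht1]; exact lintegral_union_le _ _ _
    _ ≤ ENNReal.ofReal t + ENNReal.ofReal (t * Real.log t⁻¹) := add_le_add hlow hhigh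
    _ = ENNReal.ofReal (t * (1 + Real.log t⁻¹)) := by
        rw [← ENNReal.ofReal_add ht0.le
          (mul_nonneg ht0.le (Real.log_nonneg (one_le_inv_iff₀.2 ⟨ht0, ht1⟩))), mul_one_add]

lemma mul_one_add_log_inv_le {κ t : ℝ} (hκ0 : 0 < κ) (hκ1 : κ ≤ 1) (ht0 : 0 < t) (ht1 : t ≤ 1) :
    t * (1 + Real.log t⁻¹) ≤ (κ ^ 2)⁻¹ * t ^ (1 - κ) := by
  have hL : Real.log t ≤ 0 := Real.log_nonpos ht0.le ht1
  have key : κ ^ 2 * (1 - Real.log t) ≤ Real.exp (-κ * Real.log t) := by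
    nlinarith [Real.add_one_le_exp (-κ * Real.log t), mul_nonneg hκ0.le (sub_nonneg.2 hκ1),
      mul_nonneg (mul_nonneg hκ0.le (sub_nonneg.2 hκ1)) (neg_nonneg.2 hL)]
  rw [Real.log_inv, Real.rpow_def_of_pos ht0,
    show Real.log t * (1 - κ) = Real.log t + -κ * Real.log t by ring, Real.exp_add,
    Real.exp_log ht0, le_inv_mul_iff₀ (by positivity)]
  nlinarith [mul_le_mul_of_nonneg_left key ht0.le]

section

variable {α : Type*} [MeasurableSpace α]

/-- A p-function in the paper's sense, without the requirements `Measurable f` and `f ≤ 1`. -/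
def SuperUniform (μ : Measure α) (f : α → ℝ≥0∞) : Prop :=
  ∀ ε : ℝ≥0∞, 0 < ε → μ {x | f x ≤ ε} ≤ ε

lemma lintegral_eq_lintegral_meas_ofReal_lt (μ : Measure α) [SFinite μ] {F : α → ℝ≥0∞}
    (hF : Measurable F) :
    ∫⁻ x, F x ∂μ = ∫⁻ t in Ioi 0, μ {x | ENNReal.ofReal t < F x} := by
  have hS : MeasurableSet {p : α × ℝ | ENNReal.ofReal p.2 < F p.1} :=
    measurableSet_lt (ENNReal.measurable_ofReal.comp measurable_snd) (hF.comp measurable_fst)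
  have hvol : ∀ x, volume.restrict (Ioi (0 : ℝ)) {t | ENNReal.ofReal t < F x} = F x := by
    intro x
    rw [Measure.restrict_apply' measurableSet_Ioi]
    rcases eq_or_ne (F x) ∞ with hx | hx
    · simp [hx]
    · have : {t | ENNReal.ofReal t < F x} ∩ Ioi 0 = Ioo 0 (F x).toReal := by
        ext t
        exact ⟨fun h => ⟨h.2, (ENNReal.ofReal_lt_iff_lt_toReal h.2.le hx).1 h.1⟩,
          fun h => ⟨(ENNReal.ofReal_lt_iff_lt_toReal h.1.le hx).2 h.2, h.1⟩⟩
      rw [this, Real.volume_Ioo, sub_zero, ENNReal.ofReal_toReal hx]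
  calc ∫⁻ x, F x ∂μ
      = ∫⁻ x, volume.restrict (Ioi (0 : ℝ))
          (Prod.mk x ⁻¹' {p : α × ℝ | ENNReal.ofReal p.2 < F p.1}) ∂μ :=
        lintegral_congr fun x => (hvol x).symm
    _ = _ := by rw [← Measure.prod_apply hS, Measure.prod_apply_symm hS]; rfl

variable {μ : Measure α}

namespace SuperUniform

variable {f : α → ℝ≥0∞}

lemma of_lt_one [IsProbabilityMeasure μ]
    (h : ∀ ε : ℝ≥0∞, 0 < ε → ε < 1 → μ {x | f x ≤ ε} ≤ ε) : SuperUniform μ f := fun ε hε =>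
  (lt_or_ge ε 1).elim (h ε hε) prob_le_one.trans

lemma measure_le (hf : SuperUniform μ f) (ε : ℝ≥0∞) : μ {x | f x ≤ ε} ≤ ε :=
  le_of_forall_gt_imp_ge_of_dense fun c hc =>
    (measure_mono fun _ (hx : _ ≤ ε) => hx.trans hc.le).trans (hf c (bot_le.trans_lt hc))

lemma measure_preimage_le [IsProbabilityMeasure μ] (hf : SuperUniform μ f)
    {D : Set ℝ≥0∞} (hD : IsLowerSet D) :
    μ (f ⁻¹' D) ≤ volume.restrict (Ioc (0 : ℝ) 1) (ENNReal.ofReal ⁻¹' D) := by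
  set c := volume.restrict (Ioc (0 : ℝ) 1) (ENNReal.ofReal ⁻¹' D)
  rcases le_or_gt 1 c with hc1 | hc1
  · exact prob_le_one.trans hc1
  have hmin : ∀ v ∈ D, min v 1 ≤ c := by
    intro v hv
    have hv1 : (min v 1).toReal ≤ 1 := ENNReal.toReal_le_of_le_ofReal zero_le_one (by simp)
    have hsub : Ioc 0 (min v 1).toReal ⊆ ENNReal.ofReal ⁻¹' D ∩ Ioc 0 1 := fun u hu =>
      ⟨hD (ENNReal.ofReal_le_of_le_toReal hu.2 |>.trans (min_le_left v 1)) hv,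
        hu.1, hu.2.trans hv1⟩
    calc min v 1 = volume (Ioc 0 (min v 1).toReal) := by
          rw [Real.volume_Ioc, sub_zero, ENNReal.ofReal_toReal (by simp)]
      _ ≤ c := (measure_mono hsub).trans_eq (Measure.restrict_apply' measurableSet_Ioc).symm
  have hDc : f ⁻¹' D ⊆ {x | f x ≤ c} := fun x hx =>
    (min_le_iff.1 (hmin _ hx)).resolve_right hc1.not_ge
  exact (measure_mono hDc).trans (hf.measure_le c)

lemma lintegral_comp_le [IsProbabilityMeasure μ] (hf : SuperUniform μ f) (hfm : Measurable f)
    {φ : ℝ≥0∞ → ℝ≥0∞} (hφ : Antitone φ) :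
    ∫⁻ x, φ (f x) ∂μ ≤ ∫⁻ u in Ioc (0 : ℝ) 1, φ (ENNReal.ofReal u) := by
  rw [lintegral_eq_lintegral_meas_ofReal_lt μ (F := fun x => φ (f x)) (hφ.measurable.comp hfm),
    lintegral_eq_lintegral_meas_ofReal_lt _ (F := fun u => φ (ENNReal.ofReal u))
      (hφ.measurable.comp ENNReal.measurable_ofReal)]
  exact lintegral_mono fun t =>
    hf.measure_preimage_le (D := {v | ENNReal.ofReal t < φ v}) fun _ _ hba ha =>
      ha.trans_le (hφ hba)

lemma lintegral_rpow_sub_one_le [IsProbabilityMeasure μ]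
    (hf : SuperUniform μ f) (hfm : Measurable f) {a : ℝ} (ha0 : 0 < a) (ha1 : a ≤ 1) :
    ∫⁻ x, f x ^ (a - 1) ∂μ ≤ ENNReal.ofReal a⁻¹ :=
  (hf.lintegral_comp_le hfm (ENNReal.antitone_rpow_of_nonpos (by linarith))).trans_eq
    (lintegral_Ioc_ofReal_rpow_sub_one ha0)

end SuperUniform

lemma superUniform_min_one_div [IsProbabilityMeasure μ] {e : α → ℝ≥0∞}
    (he : AEMeasurable e μ) {c : ℝ≥0∞} (hc0 : c ≠ 0) (hc : c ≠ ∞) (hint : ∫⁻ x, e x ∂μ ≤ c) :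
    SuperUniform μ fun x => min 1 (c / e x) := by
  refine SuperUniform.of_lt_one fun ε hε hε1 => ?_
  have hε0 : ε ≠ 0 := hε.ne'
  have hεtop : ε ≠ ∞ := hε1.ne_top
  have hsub : {x | min 1 (c / e x) ≤ ε} ⊆ {x | c / ε ≤ e x} := fun x hx => by
    have hce : c / e x ≤ ε := (min_le_iff.1 hx).resolve_left hε1.not_ge
    rw [ENNReal.div_le_iff_le_mul (Or.inr hεtop) (Or.inr hε0)] at hce
    exact ENNReal.div_le_of_le_mul (by rwa [mul_comm])
  calc μ {x | min 1 (c / e x) ≤ ε} ≤ μ {x | c / ε ≤ e x} := measure_mono hsub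
    _ ≤ (∫⁻ x, e x ∂μ) / (c / ε) :=
        meas_ge_le_lintegral_div he (ENNReal.div_pos hc0 hεtop).ne' (ENNReal.div_ne_top hc hε0)
    _ ≤ c / (c / ε) := by gcongr
    _ = ε := ENNReal.div_div_cancel hc0 hc

lemma superUniform_min_one_mul_rpow [IsProbabilityMeasure μ] {F : α → ℝ≥0∞} {κ : ℝ}
    (hκ0 : 0 < κ) (hκ1 : κ < 1)
    (hF : ∀ t : ℝ, 0 < t → t ≤ 1 →
      μ {x | F x ≤ ENNReal.ofReal t} ≤ ENNReal.ofReal (t * (1 + Real.log t⁻¹))) :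
    SuperUniform μ fun x => min 1 ((ENNReal.ofReal κ ^ 2)⁻¹ * F x ^ (1 - κ)) := by
  refine SuperUniform.of_lt_one fun ε hε hε1 => ?_
  obtain ⟨e, rfl⟩ : ∃ e : ℝ, ENNReal.ofReal e = ε := ⟨ε.toReal, ENNReal.ofReal_toReal hε1.ne_top⟩
  have he0 : 0 < e := ENNReal.ofReal_pos.1 hε
  have he1 : e < 1 := by simpa using hε1
  have hc0 : 0 < κ ^ 2 * e := by positivity
  have hκ' : 0 < 1 - κ := by linarith
  set t := (κ ^ 2 * e) ^ (1 - κ)⁻¹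
  have ht0 : 0 < t := Real.rpow_pos_of_pos hc0 _
  have ht1 : t ≤ 1 :=
    Real.rpow_le_one hc0.le (mul_le_one₀ (pow_le_one₀ hκ0.le hκ1.le) he0.le he1.le)
      (inv_nonneg.2 hκ'.le)
  have hsub : {x | min 1 ((ENNReal.ofReal κ ^ 2)⁻¹ * F x ^ (1 - κ)) ≤ ENNReal.ofReal e}
      ⊆ {x | F x ≤ ENNReal.ofReal t} := fun x hx => by
    have h := (min_le_iff.1 hx).resolve_left hε1.not_ge
    rwa [ENNReal.inv_mul_le_iff (by positivity) (by simp), ← ENNReal.ofReal_pow hκ0.le,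
      ← ENNReal.ofReal_mul (by positivity), ← ENNReal.le_rpow_inv_iff hκ',
      ENNReal.ofReal_rpow_of_pos hc0] at h
  calc _ ≤ μ {x | F x ≤ ENNReal.ofReal t} := measure_mono hsub
    _ ≤ ENNReal.ofReal (t * (1 + Real.log t⁻¹)) := hF t ht0 ht1
    _ ≤ ENNReal.ofReal ((κ ^ 2)⁻¹ * t ^ (1 - κ)) :=
        ENNReal.ofReal_le_ofReal (mul_one_add_log_inv_le hκ0 hκ1.le ht0 ht1)
    _ = ENNReal.ofReal e := by
        rw [Real.rpow_inv_rpow hc0.le hκ'.ne', inv_mul_cancel_left₀ (by positivity)]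

end

section JointMeasure

variable {Ω Θ : Type*} [MeasurableSpace Ω] [MeasurableSpace Θ] (P : Kernel Θ Ω) (Q : Measure Θ)

lemma map_swap_compProd_apply [IsSFiniteKernel P] [SFinite Q] {S : Set (Ω × Θ)}
    (hS : MeasurableSet S) :
    (Q.compProd P).map Prod.swap S = ∫⁻ θ, P θ {ω | (ω, θ) ∈ S} ∂Q := by
  rw [Measure.map_apply measurable_swap hS, Measure.compProd_apply (hS.preimage measurable_swap)]
  rfl

lemma lintegral_map_swap_compProd [IsSFiniteKernel P] [SFinite Q] {e : Ω × Θ → ℝ≥0∞}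
    (he : Measurable e) :
    ∫⁻ x, e x ∂(Q.compProd P).map Prod.swap = ∫⁻ θ, ∫⁻ ω, e (ω, θ) ∂P θ ∂Q := by
  rw [lintegral_map he measurable_swap,
    Measure.lintegral_compProd (f := fun a => e a.swap) (he.comp measurable_swap)]
  rfl

variable [IsMarkovKernel P] [IsProbabilityMeasure Q]

instance : IsProbabilityMeasure ((Q.compProd P).map Prod.swap) :=
  Measure.isProbabilityMeasure_map measurable_swap.aemeasurable

theorem exists_superUniform_mul_le_inv {e : Ω × Θ → ℝ≥0∞} (he : Measurable e)
    (hint : ∫⁻ x, e x ∂(Q.compProd P).map Prod.swap ≤ 1)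
    (hpos : ∀ θ, ∫⁻ ω, e (ω, θ) ∂P θ ≠ 0) :
    ∃ g : Ω × Θ → ℝ≥0∞, ∃ h : Θ → ℝ≥0∞,
      Measurable g ∧ (∀ x, g x ≤ 1) ∧ (∀ θ, SuperUniform (P θ) fun ω => g (ω, θ)) ∧
      Measurable h ∧ (∀ θ, h θ ≤ 1) ∧ SuperUniform Q h ∧ ∀ x, g x * h x.2 ≤ (e x)⁻¹ := by
  set H : Θ → ℝ≥0∞ := fun θ => ∫⁻ ω, e (ω, θ) ∂P θ
  have hH : Measurable H :=
    Measurable.lintegral_kernel_prod_right (f := fun θ ω => e (ω, θ)) (he.comp measurable_swap)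
  have hHint : ∫⁻ θ, H θ ∂Q ≤ 1 := (lintegral_map_swap_compProd P Q he).symm.trans_le hint
  -- `H θ = ∞` only on a `Q`-null set, but there `H θ / e = ∞ / ∞ = 0` wherever `e = ∞`.
  refine ⟨fun x => if H x.2 = ∞ then 1 else min 1 (H x.2 / e x), fun θ => min 1 (1 / H θ),
    ?_, fun x => ?_, fun θ => ?_, by fun_prop, fun θ => min_le_left _ _,
    superUniform_min_one_div hH.aemeasurable one_ne_zero ENNReal.one_ne_top hHint, fun x => ?_⟩
  · exact Measurable.ite (hH.comp measurable_snd (measurableSet_singleton ∞)) measurable_const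
      (by fun_prop)
  · dsimp only
    split_ifs <;> simp
  · by_cases hθ : H θ = ∞
    · simp only [hθ, if_true]
      exact SuperUniform.of_lt_one fun ε _ hε1 => by simp [hε1.not_ge]
    · simp only [hθ, if_false]
      exact superUniform_min_one_div (e := fun ω => e (ω, θ))
        (he.comp measurable_prodMk_right).aemeasurable (hpos θ) hθ le_rfl
  · by_cases hθ : H x.2 = ∞
    · simp [hθ]
    · calc (if H x.2 = ∞ then 1 else min 1 (H x.2 / e x)) * min 1 (1 / H x.2)
          ≤ H x.2 / e x * (1 / H x.2) := by
            rw [if_neg hθ]; exact mul_le_mul' (min_le_right _ _) (min_le_right _ _)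
        _ = (e x)⁻¹ := by
            rw [div_eq_mul_inv, one_div, mul_right_comm, ENNReal.mul_inv_cancel (hpos _) hθ,
              one_mul]

theorem exists_superUniform_mul_le_rpow {κ : ℝ} (hκ0 : 0 < κ) (hκ1 : κ ≤ 1)
    {f : Ω × Θ → ℝ≥0∞} (hf : Measurable f) (hf1 : ∀ x, f x ≤ 1)
    (hfU : SuperUniform ((Q.compProd P).map Prod.swap) f) :
    ∃ g : Ω × Θ → ℝ≥0∞, ∃ h : Θ → ℝ≥0∞,
      Measurable g ∧ (∀ x, g x ≤ 1) ∧ (∀ θ, SuperUniform (P θ) fun ω => g (ω, θ)) ∧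
      Measurable h ∧ (∀ θ, h θ ≤ 1) ∧ SuperUniform Q h ∧
      ∀ x, g x * h x.2 ≤ (ENNReal.ofReal κ)⁻¹ * f x ^ (1 - κ) := by
  have hκ : ENNReal.ofReal κ ≠ 0 := (ENNReal.ofReal_pos.2 hκ0).ne'
  set e := fun x => ENNReal.ofReal κ * f x ^ (κ - 1)
  have hint : ∫⁻ x, e x ∂(Q.compProd P).map Prod.swap ≤ 1 :=
    calc ∫⁻ x, e x ∂(Q.compProd P).map Prod.swap
        = ENNReal.ofReal κ * ∫⁻ x, f x ^ (κ - 1) ∂(Q.compProd P).map Prod.swap :=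
          lintegral_const_mul _ (by fun_prop)
      _ ≤ ENNReal.ofReal κ * ENNReal.ofReal κ⁻¹ := by
          gcongr; exact hfU.lintegral_rpow_sub_one_le hf hκ0 hκ1
      _ = 1 := by rw [← ENNReal.ofReal_mul hκ0.le, mul_inv_cancel₀ hκ0.ne', ENNReal.ofReal_one]
  have hpos : ∀ θ, ∫⁻ ω, e (ω, θ) ∂P θ ≠ 0 := fun θ => by
    refine (lt_of_lt_of_le (pos_iff_ne_zero.2 hκ) ?_).ne'
    calc ENNReal.ofReal κ = ∫⁻ _, ENNReal.ofReal κ ∂P θ := by simp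
      _ ≤ ∫⁻ ω, e (ω, θ) ∂P θ := lintegral_mono fun ω => le_mul_of_one_le_right' <| by
          simpa using ENNReal.antitone_rpow_of_nonpos (by linarith) (hf1 (ω, θ))
  obtain ⟨g, h, hg, hg1, hgU, hh, hh1, hhU, hgh⟩ :=
    exists_superUniform_mul_le_inv P Q (by fun_prop) hint hpos
  refine ⟨g, h, hg, hg1, hgU, hh, hh1, hhU, fun x => (hgh x).trans_eq ?_⟩
  rw [ENNReal.mul_inv (Or.inl hκ) (Or.inl ENNReal.ofReal_ne_top), ← ENNReal.rpow_neg, neg_sub]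

lemma map_swap_compProd_mul_le_le {g : Ω × Θ → ℝ≥0∞} {h : Θ → ℝ≥0∞} (hg : Measurable g)
    (hgU : ∀ θ, SuperUniform (P θ) fun ω => g (ω, θ)) (hh : Measurable h)
    (hhU : SuperUniform Q h) {t : ℝ} (ht0 : 0 < t) (ht1 : t ≤ 1) :
    (Q.compProd P).map Prod.swap {x | g x * h x.2 ≤ ENNReal.ofReal t}
      ≤ ENNReal.ofReal (t * (1 + Real.log t⁻¹)) := by
  have hP : ∀ θ, P θ {ω | g (ω, θ) * h θ ≤ ENNReal.ofReal t}
      ≤ min 1 (ENNReal.ofReal t * (h θ)⁻¹) := fun θ =>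
    le_min prob_le_one <| (measure_mono fun ω hω =>
      (ENNReal.le_div_iff_mul_le (Or.inr (by simpa using ht0)) (Or.inr ENNReal.ofReal_ne_top)).2
        hω).trans ((hgU θ).measure_le _)
  calc (Q.compProd P).map Prod.swap {x | g x * h x.2 ≤ ENNReal.ofReal t}
      = ∫⁻ θ, P θ {ω | g (ω, θ) * h θ ≤ ENNReal.ofReal t} ∂Q :=
        map_swap_compProd_apply P Q (measurableSet_le (by fun_prop) measurable_const)
    _ ≤ ∫⁻ θ, min 1 (ENNReal.ofReal t * (h θ)⁻¹) ∂Q := lintegral_mono hP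
    _ ≤ ∫⁻ u in Ioc (0 : ℝ) 1, min 1 (ENNReal.ofReal t * (ENNReal.ofReal u)⁻¹) :=
        hhU.lintegral_comp_le hh (φ := fun v => min 1 (ENNReal.ofReal t * v⁻¹))
          fun _ _ huv => by dsimp only; gcongr
    _ ≤ ENNReal.ofReal (t * (1 + Real.log t⁻¹)) := lintegral_Ioc_min_one_mul_inv_le ht0 ht1

end JointMeasure

/-- Bayesian model `(P_θ)_{θ∈Θ}` with prior `Q`, joint measure `T`
on `Ω × Θ` (the swap-pushforward of `Q ⊗ₘ P`), and `κ ∈ (0,1)`.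
(a) For every p-function `f` w.r.t. `T` there are a conditional p-function `g`
w.r.t. `(P_θ)` and a p-function `h` w.r.t. `Q` with
`g(ω;θ)·h(θ) ≤ κ⁻¹ · f(ω,θ)^(1-κ)` `T`-a.e.
(b) For every conditional p-function `g` w.r.t. `(P_θ)` and p-function `h`
w.r.t. `Q`, `(ω,θ) ↦ min 1 (κ⁻² (g(ω;θ) h(θ))^(1-κ))` is a p-function w.r.t. `T`. -/
theorem stmt7 {Ω Θ : Type*} [MeasurableSpace Ω] [MeasurableSpace Θ]
    (P : Kernel Θ Ω) [IsMarkovKernel P]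
    (Q : Measure Θ) [IsProbabilityMeasure Q]
    (κ : ℝ) (hκ : κ ∈ Set.Ioo (0 : ℝ) 1) :
    (∀ f : Ω × Θ → ℝ≥0∞, Measurable f → (∀ x, f x ≤ 1) →
      (∀ ε : ℝ≥0∞, 0 < ε → ((Q.compProd P).map Prod.swap) {x | f x ≤ ε} ≤ ε) →
      ∃ g : Ω × Θ → ℝ≥0∞, ∃ h : Θ → ℝ≥0∞,
        Measurable g ∧ (∀ x, g x ≤ 1) ∧
        (∀ θ, ∀ ε : ℝ≥0∞, 0 < ε → P θ {ω | g (ω, θ) ≤ ε} ≤ ε) ∧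
        Measurable h ∧ (∀ θ, h θ ≤ 1) ∧
        (∀ ε : ℝ≥0∞, 0 < ε → Q {θ | h θ ≤ ε} ≤ ε) ∧
        (∀ᵐ x ∂((Q.compProd P).map Prod.swap),
          g x * h x.2 ≤ (ENNReal.ofReal κ)⁻¹ * f x ^ (1 - κ))) ∧
    (∀ g : Ω × Θ → ℝ≥0∞, ∀ h : Θ → ℝ≥0∞,
      Measurable g → (∀ x, g x ≤ 1) →
      (∀ θ, ∀ ε : ℝ≥0∞, 0 < ε → P θ {ω | g (ω, θ) ≤ ε} ≤ ε) →
      Measurable h → (∀ θ, h θ ≤ 1) →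
      (∀ ε : ℝ≥0∞, 0 < ε → Q {θ | h θ ≤ ε} ≤ ε) →
      ∀ ε : ℝ≥0∞, 0 < ε →
        ((Q.compProd P).map Prod.swap)
          {x | min 1 (((ENNReal.ofReal κ) ^ 2)⁻¹ * (g x * h x.2) ^ (1 - κ)) ≤ ε} ≤ ε) := by
  obtain ⟨hκ0, hκ1⟩ := hκ
  refine ⟨fun f hf hf1 hfU => ?_, fun g h hg _ hgU hh _ hhU =>
    superUniform_min_one_mul_rpow hκ0 hκ1 fun t ht0 ht1 =>
      map_swap_compProd_mul_le_le P Q hg hgU hh hhU ht0 ht1⟩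
  obtain ⟨g, h, hg, hg1, hgU, hh, hh1, hhU, hgh⟩ :=
    exists_superUniform_mul_le_rpow P Q hκ0 hκ1.le hf hf1 hfU
  exact ⟨g, h, hg, hg1, hgU, hh, hh1, hhU, .of_forall hgh⟩
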